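/- Let p > q ≥ 1 be coprime integers with p/(p−q) = [b_1,…,b_k], b_1,…,b_k ≥ 2, and let q̄ be the unique integer with p > q̄ ≥ 1 and q·q̄ ≡ 1 (mod p). Then p/(p−q̄) = [b_k, b_{k−1},…,b_1], and the reversal map (n_1,…,n_k) ↦ (n_k,…,n_1) is a bijection from Z_{p,q} onto Z_{p,q̄}. -/

import Mathlib

/-- The continued fraction `[n_1, …, n_k] = n_1 - 1/(n_2 - 1/(… - 1/n_k))`,
computed by the backwards recursion `t_k = n_k`, `t_i = n_i - 1/t_{i+1}`. -/
def cf : List ℚ → ℚ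
  | [] => 0
  | [a] => a
  | a :: b :: l => a - 1 / cf (b :: l)

/-- The continued fraction of a tuple of integers. -/
def cfI (l : List ℤ) : ℚ := cf (l.map (fun n => (n : ℚ)))

open Matrix

def Mm (l : List ℤ) : Matrix (Fin 2) (Fin 2) ℤ := l.foldr (fun a A => !![a,-1;1,0] * A) 1

def Kc (l : List ℤ) : ℤ := Mm l 0 0

lemma Mm_nil : Mm [] = 1 := rfl
lemma Mm_cons (a : ℤ) (l : List ℤ) : Mm (a :: l) = !![a,-1;1,0] * Mm l := rfl

lemma Kc_nil : Kc [] = 1 := by simp [Kc, Mm_nil, Matrix.one_apply]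

lemma Kc_cons (a : ℤ) (l : List ℤ) : Kc (a :: l) = a * Kc l - Mm l 1 0 := by
  simp [Kc, Mm_cons, Matrix.mul_apply, Fin.sum_univ_two]
  ring

lemma Mm10_cons (a : ℤ) (l : List ℤ) : Mm (a :: l) 1 0 = Kc l := by
  simp [Kc, Mm_cons, Matrix.mul_apply, Fin.sum_univ_two]

lemma Mm10_nil : Mm ([] : List ℤ) 1 0 = 0 := by simp [Mm_nil, Matrix.one_apply]

lemma Mm_append (l m : List ℤ) : Mm (l ++ m) = Mm l * Mm m := by
  induction l with
  | nil => simp [Mm_nil]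
  | cons a l ih => simp [Mm_cons, List.cons_append, ih, Matrix.mul_assoc]

lemma Mm_det (l : List ℤ) : (Mm l).det = 1 := by
  induction l with
  | nil => simp [Mm_nil]
  | cons a l ih => rw [Mm_cons, Matrix.det_mul, ih, Matrix.det_fin_two_of]; ring

lemma Mm_reverse (l : List ℤ) :
    Mm l.reverse = !![1,0;0,-1] * (Mm l)ᵀ * !![1,0;0,-1] := by
  induction l with
  | nil =>
    ext i j; fin_cases i <;> fin_cases j <;>
      simp [Mm_nil, Matrix.mul_apply, Fin.sum_univ_two, Matrix.transpose_apply, Matrix.one_apply]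
  | cons a l ih =>
    have hT : (!![(a:ℤ),-1;1,0])ᵀ = !![a,1;-1,0] := by
      ext i j; fin_cases i <;> fin_cases j <;> rfl
    have hJ : (!![(1:ℤ),0;0,-1]) * !![a,-1;1,0] = !![a,1;-1,0] * !![1,0;0,-1] := by
      rw [Matrix.mul_fin_two, Matrix.mul_fin_two]; norm_num
    rw [List.reverse_cons, Mm_append, ih, Mm_cons, Mm_cons, Mm_nil, mul_one,
      Matrix.transpose_mul, hT, Matrix.mul_assoc, hJ]
    simp only [Matrix.mul_assoc]

lemma Kc_reverse (l : List ℤ) : Kc l.reverse = Kc l := by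
  rw [Kc, Kc, Mm_reverse]
  simp [Matrix.mul_apply, Fin.sum_univ_two, Matrix.transpose_apply, Matrix.vecMul, dotProduct, Matrix.vecHead, Matrix.vecTail]

lemma Mm_reverse_10 (l : List ℤ) : Mm l.reverse 1 0 = -(Mm l 0 1) := by
  rw [Mm_reverse]
  simp [Matrix.mul_apply, Fin.sum_univ_two, Matrix.transpose_apply, Matrix.vecMul, dotProduct, Matrix.vecHead, Matrix.vecTail]

lemma cfI_nil : cfI [] = 0 := rfl
lemma cfI_singleton (a : ℤ) : cfI [a] = (a : ℚ) := rfl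
lemma cfI_cons₂ (a c : ℤ) (l : List ℤ) : cfI (a :: c :: l) = a - 1 / cfI (c :: l) := rfl

lemma cfI_eq : ∀ (t : List ℤ) (a : ℤ),
    (∀ s : List ℤ, s ≠ [] → s <:+ t → Kc s ≠ 0) →
    cfI (a :: t) = (Kc (a :: t) : ℚ) / (Kc t : ℚ)
  | [], a, _ => by simp [cfI_singleton, Kc_cons, Kc_nil, Mm10_nil]
  | c :: l, a, h => by
    have hsub : ∀ s : List ℤ, s ≠ [] → s <:+ l → Kc s ≠ 0 := fun s hs hsl =>
      h s hs (hsl.trans (List.suffix_cons c l))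
    have ih := cfI_eq l c hsub
    have hKcl : Kc (c :: l) ≠ 0 := h _ (by simp) List.suffix_rfl
    have hKcl' : ((Kc (c :: l) : ℚ)) ≠ 0 := Int.cast_ne_zero.mpr hKcl
    rw [cfI_cons₂, ih, one_div_div, Kc_cons a (c :: l), Mm10_cons]
    push_cast
    field_simp

lemma Kc_big : ∀ l : List ℤ, (∀ x ∈ l, 2 ≤ x) → 1 ≤ Kc l ∧ Mm l 1 0 < Kc l := by
  intro l
  induction l with
  | nil => intro _; rw [Kc_nil, Mm10_nil]; omega
  | cons a l ih =>
    intro h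
    obtain ⟨h1, h2⟩ := ih (fun x hx => h x (List.mem_cons_of_mem a hx))
    have ha : 2 ≤ a := h a List.mem_cons_self
    rw [Kc_cons, Mm10_cons]
    constructor <;> nlinarith

lemma Kc_pos_of_pos (l : List ℤ)
    (h : ∀ s : List ℤ, s ≠ [] → s <:+ l → 0 < cfI s) :
    ∀ s : List ℤ, s <:+ l → 0 < Kc s := by
  induction l with
  | nil =>
    intro s hs
    rw [List.suffix_nil.mp hs, Kc_nil]; omega
  | cons a l ih =>
    have hsub : ∀ s : List ℤ, s ≠ [] → s <:+ l → 0 < cfI s := fun s h1 h2 =>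
      h s h1 (h2.trans (List.suffix_cons a l))
    have ihp := ih hsub
    intro s hs
    rcases List.suffix_cons_iff.mp hs with rfl | hsl
    · have hpos : 0 < cfI (a :: l) := h _ (by simp) List.suffix_rfl
      have hne : ∀ s : List ℤ, s ≠ [] → s <:+ l → Kc s ≠ 0 := fun s h1 h2 =>
        (ihp s h2).ne'
      rw [cfI_eq l a hne] at hpos
      have hl : (0:ℚ) < (Kc l : ℚ) := by exact_mod_cast ihp l List.suffix_rfl
      have : (0:ℚ) < (Kc (a :: l) : ℚ) := by
        by_contra hcon
        push_neg at hcon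
        have : (Kc (a :: l) : ℚ) / (Kc l : ℚ) ≤ 0 := div_nonpos_iff.mpr (Or.inr ⟨hcon, hl.le⟩)
        linarith
      exact_mod_cast this
    · exact ihp s hsl

/-- A tuple is admissible if every denominator `t_i`, `i = 2, …, k`, appearing in the
backwards recursion computing the continued fraction is positive, i.e. the continued
fraction of every nonempty proper suffix is positive. -/
def Admissible (l : List ℤ) : Prop :=
  ∀ t : List ℤ, t ≠ [] → t ≠ l → t <:+ l → 0 < cfI t

/-- Given the tuple `b = (b_1, …, b_k)` with `p/(p-q) = [b_1, …, b_k]`, the set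
`Z_{p,q}` consists of the admissible `k`-tuples `(n_1, …, n_k)` of non-negative
integers with `[n_1, …, n_k] = 0` and `0 ≤ n_i ≤ b_i` for all `i`. -/
def Zset (b : List ℤ) : Set (List ℤ) :=
  {n | Admissible n ∧ cfI n = 0 ∧ List.Forall₂ (fun x y => 0 ≤ x ∧ x ≤ y) n b}

lemma prefix_Kc (n P S : List ℤ) (h : n = P ++ S) (h0 : Kc n = 0) (h1 : Mm n 0 1 = -1) :
    Kc P = Mm S 1 0 := by
  have hM : Mm P * Mm S = Mm n := by rw [h, Mm_append]
  have hadj : Mm S * (Mm S).adjugate = 1 := by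
    rw [Matrix.mul_adjugate, Mm_det, one_smul]
  have hP : Mm P = Mm n * (Mm S).adjugate := by
    calc Mm P = Mm P * (Mm S * (Mm S).adjugate) := by rw [hadj, mul_one]
    _ = Mm P * Mm S * (Mm S).adjugate := by rw [Matrix.mul_assoc]
    _ = Mm n * (Mm S).adjugate := by rw [hM]
  have hKn : Mm n 0 0 = 0 := h0
  rw [Kc, hP, Matrix.adjugate_fin_two, Matrix.mul_apply, Fin.sum_univ_two]
  simp [hKn, h1]

lemma suffix_of_proper_suffix_cons {s : List ℤ} {a : ℤ} {t : List ℤ}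
    (h : s <:+ a :: t) (hne : s ≠ a :: t) : s <:+ t := by
  rcases List.suffix_cons_iff.mp h with rfl | h'
  · exact absurd rfl hne
  · exact h'

lemma mapsTo_rev (b n : List ℤ) (hn : n ∈ Zset b) : n.reverse ∈ Zset b.reverse := by
  obtain ⟨hadm, hzero, hfa⟩ := hn
  refine ⟨?_, ?_, List.rel_reverse hfa⟩
  all_goals {
    rcases n with _ | ⟨a, t⟩
    · first
      | exact fun s h1 h2 h3 => absurd (List.suffix_nil.mp h3) h1
      | rfl
    · -- setup
      have Hs : ∀ s : List ℤ, s <:+ t → 0 < Kc s := by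
        apply Kc_pos_of_pos
        intro s h1 h2
        refine hadm s h1 ?_ (h2.trans (List.suffix_cons a t))
        intro hcon
        have := h2.length_le
        rw [hcon] at this
        simp at this
      have hKt : 0 < Kc t := Hs t List.suffix_rfl
      have hKne : ∀ s : List ℤ, s ≠ [] → s <:+ t → Kc s ≠ 0 := fun s _ h2 => (Hs s h2).ne'
      have hKn : Kc (a :: t) = 0 := by
        have h' := hzero
        rw [cfI_eq t a hKne] at h'
        rcases div_eq_zero_iff.mp h' with h'' | h''
        · exact_mod_cast h''
        · exact absurd h'' (by exact_mod_cast hKt.ne')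
      have h01 : Mm (a :: t) 0 1 = -1 := by
        have hdet := Mm_det (a :: t)
        rw [Matrix.det_fin_two] at hdet
        have e1 : Mm (a :: t) 0 0 = 0 := hKn
        have e2 : Mm (a :: t) 1 0 = Kc t := Mm10_cons a t
        rw [e1, e2] at hdet
        nlinarith [hdet, hKt]
      have hpref : ∀ P S : List ℤ, a :: t = P ++ S → S ≠ [] → 0 < Kc P := by
        intro P S hPS hS
        rcases S with _ | ⟨c, S'⟩
        · exact absurd rfl hS
        rw [prefix_Kc (a :: t) P (c :: S') hPS hKn h01, Mm10_cons]
        have hsfx : S' <:+ t := by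
          have h1 : c :: S' <:+ a :: t := ⟨P, hPS.symm⟩
          have h2 : S' <:+ a :: t := (List.suffix_cons c S').trans h1
          apply suffix_of_proper_suffix_cons h2
          intro hcon
          have := h1.length_le
          rw [hcon] at this
          simp at this
        exact Hs S' hsfx
      have hrevpos : ∀ s : List ℤ, s ≠ (a :: t).reverse → s <:+ (a :: t).reverse → 0 < Kc s := by
        intro s hne hs
        obtain ⟨u, hu⟩ := hs
        have hn' : a :: t = s.reverse ++ u.reverse := by
          have h5 := congrArg List.reverse hu
          rw [List.reverse_reverse, List.reverse_append] at h5
          exact h5.symm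
        have hu0 : u ≠ [] := by
          rintro rfl
          rw [List.nil_append] at hu
          exact hne hu
        have := hpref s.reverse u.reverse hn' (by simpa using hu0)
        rwa [Kc_reverse] at this
      clear hadm hzero hfa
      first
      | -- Admissible goal
        ( intro s h1 h2 h3
          rcases s with _ | ⟨c, r⟩
          · exact absurd rfl h1
          have hr : ∀ s' : List ℤ, s' ≠ [] → s' <:+ r → Kc s' ≠ 0 := by
            intro s' h1' h2'
            have hs' : s' <:+ (a :: t).reverse :=
              (h2'.trans (List.suffix_cons c r)).trans h3
            refine (hrevpos s' ?_ hs').ne'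
            intro hcon
            have hl1 := h2'.length_le
            have hl2 := h3.length_le
            rw [hcon] at hl1
            simp at hl1 hl2
            omega
          rw [cfI_eq r c hr]
          apply div_pos
          · exact_mod_cast hrevpos (c :: r) h2 h3
          · have : 0 < Kc r := by
              rcases eq_or_ne r [] with rfl | hr0
              · rw [Kc_nil]; omega
              · refine hrevpos r ?_ ((List.suffix_cons c r).trans h3)
                intro hcon
                have := h3.length_le
                rw [← hcon] at this
                simp at this
            exact_mod_cast this )
      | -- cfI = 0 goal
        ( obtain ⟨c, r, hcr⟩ := List.exists_cons_of_ne_nil (l := (a :: t).reverse) (by simp)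
          have hr : ∀ s' : List ℤ, s' ≠ [] → s' <:+ r → Kc s' ≠ 0 := by
            intro s' h1' h2'
            have hs' : s' <:+ (a :: t).reverse := by
              rw [hcr]
              exact h2'.trans (List.suffix_cons c r)
            refine (hrevpos s' ?_ hs').ne'
            intro hcon
            have hl1 := h2'.length_le
            rw [hcon, hcr] at hl1
            simp only [List.length_cons] at hl1
            omega
          rw [hcr, cfI_eq r c hr]
          have : Kc (c :: r) = 0 := by rw [← hcr, Kc_reverse]; exact hKn
          rw [this, Int.cast_zero, zero_div] ) }

/-- Let `p > q ≥ 1` be coprime with `p/(p-q) = [b_1, …, b_k]`, all `b_i ≥ 2`, and let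
`q̄` be the unique integer with `p > q̄ ≥ 1` and `q·q̄ ≡ 1 (mod p)`.  Then
`p/(p-q̄) = [b_k, …, b_1]`, so that `Z_{p,q̄}` is defined by the reversed tuple, and
reversal is a bijection from `Z_{p,q}` onto `Z_{p,q̄}`. -/
theorem stmt12 (p q : ℤ) (hq : 1 ≤ q) (hqp : q < p) (hcop : IsCoprime p q)
    (b : List ℤ) (hb : ∀ x ∈ b, 2 ≤ x) (hbcf : cfI b = (p : ℚ) / ((p : ℚ) - (q : ℚ)))
    (qb : ℤ) (hqb1 : 1 ≤ qb) (hqbp : qb < p) (hmod : q * qb ≡ 1 [ZMOD p]) :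
    cfI b.reverse = (p : ℚ) / ((p : ℚ) - (qb : ℚ)) ∧
      Set.BijOn (fun n : List ℤ => n.reverse) (Zset b) (Zset b.reverse) := by
  constructor
  · -- part 1
    have hp0 : (0:ℤ) < p := by omega
    have hpq : (0:ℤ) < p - q := by omega
    have hbne : b ≠ [] := by
      intro h
      rw [h, cfI_nil] at hbcf
      have h2 : (0:ℚ) < (p:ℚ) / ((p:ℚ) - (q:ℚ)) := by
        apply div_pos
        · exact_mod_cast hp0
        · have : ((p - q : ℤ) : ℚ) = (p:ℚ) - (q:ℚ) := by push_cast; ring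
          rw [← this]; exact_mod_cast hpq
      rw [← hbcf] at h2; exact lt_irrefl 0 h2
    obtain ⟨a, t, rfl⟩ := List.exists_cons_of_ne_nil hbne
    have hbig := Kc_big (a :: t) hb
    have hbigt := Kc_big t (fun x hx => hb x (List.mem_cons_of_mem a hx))
    have hKb1 : 1 ≤ Kc (a :: t) := hbig.1
    have hKt1 : 1 ≤ Kc t := hbigt.1
    have hKne : ∀ s : List ℤ, s ≠ [] → s <:+ t → Kc s ≠ 0 := by
      intro s _ h2
      have := (Kc_big s (fun x hx => hb x (List.mem_cons_of_mem a (h2.subset hx)))).1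
      omega
    have hKtq : ((Kc t : ℚ)) ≠ 0 := Int.cast_ne_zero.mpr (by omega)
    have hpqq : ((p:ℚ) - (q:ℚ)) ≠ 0 := by
      have : ((p - q : ℤ) : ℚ) = (p:ℚ) - (q:ℚ) := by push_cast; ring
      rw [← this]; exact Int.cast_ne_zero.mpr (by omega)
    have hcf : ((Kc (a :: t)) : ℚ) / (Kc t : ℚ) = (p:ℚ) / ((p:ℚ) - (q:ℚ)) := by
      rw [← cfI_eq t a hKne]; exact hbcf
    have hcross : Kc (a :: t) * (p - q) = p * Kc t := by
      have h2 := (div_eq_div_iff hKtq hpqq).mp hcf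
      have h3 : ((Kc (a :: t) * (p - q) : ℤ) : ℚ) = ((p * Kc t : ℤ) : ℚ) := by
        push_cast; linarith [h2]
      exact_mod_cast h3
    have hdet := Mm_det (a :: t)
    rw [Matrix.det_fin_two] at hdet
    have e2 : Mm (a :: t) 1 0 = Kc t := Mm10_cons a t
    have e0 : Mm (a :: t) 0 0 = Kc (a :: t) := rfl
    rw [e2, e0] at hdet
    have hcopb : IsCoprime (Kc (a :: t)) (Kc t) :=
      ⟨Mm (a :: t) 1 1, -(Mm (a :: t) 0 1), by linear_combination hdet⟩
    have hcoppq : IsCoprime p (p - q) := by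
      obtain ⟨u, v, huv⟩ := hcop
      exact ⟨u + v, -v, by linear_combination huv⟩
    have hdvd1 : p ∣ Kc (a :: t) := hcoppq.dvd_of_dvd_mul_right ⟨Kc t, hcross⟩
    have hdvd2 : Kc (a :: t) ∣ p := hcopb.dvd_of_dvd_mul_left ⟨p - q, by linarith [hcross]⟩
    have hKbp : Kc (a :: t) = p := Int.dvd_antisymm (by omega) (by omega) hdvd2 hdvd1
    have hKtpq : Kc t = p - q := by
      rw [hKbp] at hcross
      exact (mul_left_cancel₀ (by omega) hcross).symm
    -- reverse
    have hbrev2 : ∀ x ∈ (a :: t).reverse, 2 ≤ x := fun x hx => hb x (List.mem_reverse.mp hx)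
    obtain ⟨c, r, hcr⟩ := List.exists_cons_of_ne_nil (l := (a :: t).reverse) (by simp)
    have hKrev : Kc ((a :: t).reverse) = p := by rw [Kc_reverse]; exact hKbp
    have hd : Kc r = -(Mm (a :: t) 0 1) := by
      have h5 := Mm_reverse_10 (a :: t)
      rw [hcr, Mm10_cons] at h5
      exact h5
    have hd1 : 1 ≤ Kc r :=
      (Kc_big r (fun x hx => hbrev2 x (hcr ▸ List.mem_cons_of_mem c hx))).1
    have hdp : Kc r < p := by
      have h5 := (Kc_big ((a :: t).reverse) hbrev2).2
      rw [hcr, Mm10_cons] at h5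
      have h6 := hKrev
      rw [hcr] at h6
      omega
    have hmod' : p ∣ q * qb - 1 := by
      have h5 := Int.ModEq.dvd hmod
      have h6 : q * qb - 1 = -(1 - q * qb) := by ring
      rw [h6]
      exact dvd_neg.mpr h5
    have hdet2 : p * Mm (a :: t) 1 1 + Kc r * (p - q) = 1 := by
      linear_combination hdet - Mm (a :: t) 1 1 * hKbp + (p - q) * hd + Mm (a :: t) 0 1 * hKtpq
    have hkey : p ∣ q * (qb - (p - Kc r)) := by
      obtain ⟨m, hm⟩ := hmod'
      exact ⟨m + Mm (a :: t) 1 1 + Kc r - q, by linear_combination hm - hdet2⟩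
    have hdvd3 : p ∣ qb - (p - Kc r) := hcop.dvd_of_dvd_mul_left hkey
    have hqbd : qb = p - Kc r := by
      have h5 : qb - (p - Kc r) = 0 :=
        Int.eq_zero_of_abs_lt_dvd hdvd3 (by rw [abs_lt]; omega)
      omega
    have hrne : ∀ s : List ℤ, s ≠ [] → s <:+ r → Kc s ≠ 0 := by
      intro s _ h2
      have hsub : ∀ x ∈ s, 2 ≤ x := fun x hx =>
        hbrev2 x (hcr ▸ List.mem_cons_of_mem c (h2.subset hx))
      have := (Kc_big s hsub).1
      omega
    rw [hcr, cfI_eq r c hrne]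
    have h7 : Kc (c :: r) = p := by rw [← hcr]; exact hKrev
    rw [h7]
    have h8 : ((p:ℚ) - (qb:ℚ)) = ((Kc r : ℤ) : ℚ) := by
      rw [hqbd]; push_cast; ring
    rw [h8]
  · -- part 2
    have h1 : Set.MapsTo (fun n : List ℤ => n.reverse) (Zset b) (Zset b.reverse) :=
      fun x hx => mapsTo_rev b x hx
    have h2 : Set.MapsTo (fun n : List ℤ => n.reverse) (Zset b.reverse) (Zset b) := by
      intro x hx
      have := mapsTo_rev b.reverse x hx
      rwa [List.reverse_reverse] at this
    exact Set.InvOn.bijOn ⟨fun x _ => List.reverse_reverse x, fun x _ => List.reverse_reverse x⟩ h1 h2
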